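/- arXiv:2306.10368 — 2 statements merged into one kernel-verified Lean document; each statement's English description precedes it below -/
import Mathlib

section
/- Suppose P_1,…,P_{m+Δ} are nonnegative reals with Σ_i P_i ≥ OPT, and P'_1,…,P'_{m+Δ} are nonnegative reals with P'_i ≥ P_i/2 for all i. Then the sum of the m largest P'_i is at least (m/(2(m+Δ)))·OPT; in particular if Δ ≤ m this is at least OPT/4. -/
/-!
Among `m + Δ` drones the `m` most profitable ones earn at least the fraction `m / (m + Δ)` of the
total corrected profit, since each of them beats every discarded one. The total corrected profit
is at least half the pre-correction total, hence at least `OPT / 2`.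
-/

open Finset

namespace Finset

variable {ι M : Type*} [AddCommMonoid M] [PartialOrder M] [IsOrderedAddMonoid M]

theorem card_nsmul_sum_le_card_nsmul_sum_of_forall_le {s t : Finset ι} {f : ι → M}
    (h : ∀ i ∈ s, ∀ j ∈ t, f j ≤ f i) : #s • ∑ j ∈ t, f j ≤ #t • ∑ i ∈ s, f i :=
  calc #s • ∑ j ∈ t, f j = ∑ i ∈ s, ∑ j ∈ t, f j := (sum_const _).symm
    _ ≤ ∑ i ∈ s, ∑ j ∈ t, f i := sum_le_sum fun i hi => sum_le_sum fun j hj => h i hi j hj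
    _ = #t • ∑ i ∈ s, f i := by simp only [sum_const, smul_sum]

theorem card_nsmul_sum_univ_le_of_forall_compl_le [Fintype ι] {s : Finset ι} {f : ι → M}
    (h : ∀ i ∈ s, ∀ j ∉ s, f j ≤ f i) : #s • ∑ i, f i ≤ Fintype.card ι • ∑ i ∈ s, f i := by
  classical
  have hcompl : #s • ∑ j ∈ sᶜ, f j ≤ #sᶜ • ∑ i ∈ s, f i :=
    card_nsmul_sum_le_card_nsmul_sum_of_forall_le fun i hi j hj => h i hi j (mem_compl.mp hj)
  calc #s • ∑ i, f i = #s • ∑ i ∈ s, f i + #s • ∑ j ∈ sᶜ, f j := by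
        rw [← sum_add_sum_compl s f, smul_add]
    _ ≤ #s • ∑ i ∈ s, f i + #sᶜ • ∑ i ∈ s, f i := add_le_add_right hcompl _
    _ = Fintype.card ι • ∑ i ∈ s, f i := by rw [← add_smul, card_add_card_compl]

end Finset

theorem stmt_5_general (m Δ : ℕ) (hm : 0 < m) (OPT : ℝ) (hOPT : 0 ≤ OPT)
    (P P' : Fin (m + Δ) → ℝ)
    (hsum : ∑ i, P i ≥ OPT) (hhalf : ∀ i, P' i ≥ P i / 2)
    (SA : Finset (Fin (m + Δ))) (hcard : SA.card = m)
    (hlargest : ∀ i ∈ SA, ∀ j ∉ SA, P' j ≤ P' i) :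
    (∑ i ∈ SA, P' i ≥ ((m : ℝ) / (2 * (m + Δ))) * OPT) ∧
      (Δ ≤ m → ∑ i ∈ SA, P' i ≥ OPT / 4) := by
  have htop : (m : ℝ) * ∑ i, P' i ≤ (m + Δ) * ∑ i ∈ SA, P' i := by
    simpa [hcard, nsmul_eq_mul] using card_nsmul_sum_univ_le_of_forall_compl_le hlargest
  have htotal : OPT / 2 ≤ ∑ i, P' i :=
    calc OPT / 2 ≤ ∑ i, P i / 2 := by rw [← sum_div]; linarith
      _ ≤ ∑ i, P' i := sum_le_sum fun i _ => hhalf i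
  have hpos : (0 : ℝ) < m + Δ := by positivity
  have hratio : ∑ i ∈ SA, P' i ≥ ((m : ℝ) / (2 * (m + Δ))) * OPT := by
    rw [ge_iff_le, div_mul_eq_mul_div, div_le_iff₀ (by positivity)]
    nlinarith
  refine ⟨hratio, fun hΔm => ?_⟩
  have hquarter : (1 : ℝ) / 4 ≤ m / (2 * (m + Δ)) := by
    rw [div_le_div_iff₀ (by norm_num) (by positivity)]
    linarith [(Nat.cast_le (α := ℝ)).mpr hΔm]
  nlinarith

/-- The 1/4-approximation guarantee: if pre-correction profits sum to at least `OPT` and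
correction loses at most half per drone, the `m` most profitable corrected drones yield
at least `(m/(2(m+Δ)))·OPT`, hence at least `OPT/4` when `Δ ≤ m`. -/
theorem stmt_5 (m Δ : ℕ) (hm : 0 < m) (hΔ : 0 < Δ) (OPT : ℝ) (hOPT : 0 ≤ OPT)
    (P P' : Fin (m + Δ) → ℝ) (hP : ∀ i, 0 ≤ P i) (hP' : ∀ i, 0 ≤ P' i)
    (hsum : ∑ i, P i ≥ OPT) (hhalf : ∀ i, P' i ≥ P i / 2)
    (SA : Finset (Fin (m + Δ))) (hcard : SA.card = m)
    (hlargest : ∀ i ∈ SA, ∀ j ∉ SA, P' j ≤ P' i) :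
    (∑ i ∈ SA, P' i ≥ ((m : ℝ) / (2 * (m + Δ))) * OPT) ∧
      (Δ ≤ m → ∑ i ∈ SA, P' i ≥ OPT / 4) :=
  stmt_5_general m Δ hm OPT hOPT P P' hsum hhalf SA hcard hlargest
end

section
/- Let Q be a subproblem, A an MPFFA for Q, and J the set of jobs in A ending at the common latest endtime t_Q of the drones in the top T_Q of Q. Let A' = A with the jobs in J removed, and Q' the subproblem for which A' is fitting. Then A' is an MPFFA for Q': its profit is at least that of any other fitting family of assignments for Q'. -/
/-!
Removing the jobs `J` that end at `t_Q` is an exchange argument: no job of a family `D'`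
fitting `Q'` ends at `t_Q`, because each drone's latest endtime in `Q'` lies strictly below
`t_Q`. Hence `D' ∪ J` is again pairwise disjoint and fits `Q`, so maximality of `A` gives
`P(D') + P(J) ≤ P(A) = P(A') + P(J)`.
-/

open Finset Function

namespace Finset

variable {α : Type*} {s u : Finset α}

section LinearOrder

variable {β : Type*} [LinearOrder β] [OrderBot β] {f : α → β} {b : β}

theorem forall_lt_of_sup_eq_of_card_eq (hs : ∀ j ∈ s, f j < b) (hsup : u.sup f = s.sup f)
    (hcard : #u = #s) : ∀ j ∈ u, f j < b := by
  intro j hj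
  obtain ⟨k, hk⟩ : s.Nonempty := card_pos.mp (hcard ▸ card_pos.mpr ⟨j, hj⟩)
  calc f j ≤ u.sup f := le_sup hj
    _ = s.sup f := hsup
    _ < b := (Finset.sup_lt_iff (bot_le.trans_lt (hs k hk))).mpr hs

theorem forall_lt_of_mem_filter_ne (hs : s.sup f ≤ b) :
    ∀ j ∈ s.filter (f · ≠ b), f j < b := by
  intro j hj
  rw [mem_filter] at hj
  exact lt_of_le_of_ne ((le_sup hj.1).trans hs) hj.2

end LinearOrder

variable (p : α → Prop) [DecidablePred p]

theorem disjoint_filter_of_forall_not (hu : ∀ j ∈ u, ¬ p j) : Disjoint (s.filter p) u :=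
  disjoint_left.mpr fun j hj hju => hu j hju (mem_filter.mp hj).2

variable [DecidableEq α]

theorem sup_filter_union_eq {β : Type*} [SemilatticeSup β] [OrderBot β] {f : α → β}
    (hsup : u.sup f = (s.filter (¬ p ·)).sup f) :
    (s.filter p ∪ u).sup f = s.sup f := by
  rw [sup_union, hsup, ← sup_union, filter_union_filter_not_eq]

theorem card_filter_union_eq (hu : ∀ j ∈ u, ¬ p j) (hcard : #u = #(s.filter (¬ p ·))) :
    #(s.filter p ∪ u) = #s := by
  rw [card_union_of_disjoint (disjoint_filter_of_forall_not p hu), hcard,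
    card_filter_add_card_filter_not]

end Finset

theorem pairwise_disjoint_filter_union {ι α : Type*} [DecidableEq α] (p : α → Prop)
    [DecidablePred p] {A D : ι → Finset α} (hA : Pairwise (Disjoint on A))
    (hD : Pairwise (Disjoint on D)) (hDp : ∀ i, ∀ j ∈ D i, ¬ p j) :
    Pairwise (Disjoint on fun i => (A i).filter p ∪ D i) := by
  intro i k hik
  simp only [onFun, disjoint_union_left, disjoint_union_right]
  exact ⟨⟨disjoint_filter_filter (hA hik), (disjoint_filter_of_forall_not p (hDp i)).symm⟩,
    disjoint_filter_of_forall_not p (hDp k), hD hik⟩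

theorem stmt_13_general (n m : ℕ) (e : Fin n → ℕ) (p : Fin n → ℝ)
    (t W : Fin m → ℕ) (A : Fin m → Finset (Fin n))
    (hAdisj : ∀ i k, i ≠ k → Disjoint (A i) (A k))
    (hAfit : ∀ i, (A i).sup e = t i ∧ (A i).card = W i)
    (hAmax : ∀ D : Fin m → Finset (Fin n),
      (∀ i k, i ≠ k → Disjoint (D i) (D k)) →
      (∀ i, (D i).sup e = t i ∧ (D i).card = W i) →
      ∑ i, ∑ j ∈ D i, p j ≤ ∑ i, ∑ j ∈ A i, p j)
    (tQ : ℕ) (htQ : tQ = Finset.univ.sup t)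
    (A' : Fin m → Finset (Fin n))
    (hA' : ∀ i, A' i = (A i).filter (fun j => e j ≠ tQ)) :
    ∀ D' : Fin m → Finset (Fin n),
      (∀ i k, i ≠ k → Disjoint (D' i) (D' k)) →
      (∀ i, (D' i).sup e = (A' i).sup e ∧ (D' i).card = (A' i).card) →
      ∑ i, ∑ j ∈ D' i, p j ≤ ∑ i, ∑ j ∈ A' i, p j := by
  intro D' hD'disj hD'fit
  simp only [hA'] at hD'fit ⊢
  have hAtop : ∀ i, (A i).sup e ≤ tQ := fun i => htQ ▸ (hAfit i).1 ▸ le_sup (mem_univ i)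
  have hD'top : ∀ i, ∀ j ∈ D' i, e j ≠ tQ := fun i j hj =>
    (forall_lt_of_sup_eq_of_card_eq (forall_lt_of_mem_filter_ne (hAtop i))
      (hD'fit i).1 (hD'fit i).2 j hj).ne
  have hle := hAmax (fun i => (A i).filter (e · = tQ) ∪ D' i)
    (pairwise_disjoint_filter_union _ hAdisj hD'disj hD'top)
    (fun i => ⟨(sup_filter_union_eq _ (hD'fit i).1).trans (hAfit i).1,
      (card_filter_union_eq _ (hD'top i) (hD'fit i).2).trans (hAfit i).2⟩)
  simp only [sum_union (disjoint_filter_of_forall_not _ (hD'top _)),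
    ← sum_filter_add_sum_filter_not (A _) (e · = tQ) p, sum_add_distrib] at hle
  linarith

/-- MPFFA lemma for unit-cost MDSP: removing from an MPFFA `A` for subproblem `Q` all
jobs ending at the latest endtime `t_Q` yields a family `A'` that is an MPFFA for the
subproblem `Q'` it fits. Families are indexed assignments of jobs (with endtimes `e`
and profits `p`) to `m` drones, pairwise disjoint; fitting a subproblem means matching
each drone's latest endtime and (unit-cost) total cost. -/
theorem stmt_13 (n m : ℕ) (e : Fin n → ℕ) (p : Fin n → ℝ) (hp : ∀ j, 0 ≤ p j)
    (t W : Fin m → ℕ) (A : Fin m → Finset (Fin n))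
    (hAdisj : ∀ i k, i ≠ k → Disjoint (A i) (A k))
    (hAfit : ∀ i, (A i).sup e = t i ∧ (A i).card = W i)
    (hAmax : ∀ D : Fin m → Finset (Fin n),
      (∀ i k, i ≠ k → Disjoint (D i) (D k)) →
      (∀ i, (D i).sup e = t i ∧ (D i).card = W i) →
      ∑ i, ∑ j ∈ D i, p j ≤ ∑ i, ∑ j ∈ A i, p j)
    (tQ : ℕ) (htQ : tQ = Finset.univ.sup t)
    (A' : Fin m → Finset (Fin n))
    (hA' : ∀ i, A' i = (A i).filter (fun j => e j ≠ tQ)) :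
    ∀ D' : Fin m → Finset (Fin n),
      (∀ i k, i ≠ k → Disjoint (D' i) (D' k)) →
      (∀ i, (D' i).sup e = (A' i).sup e ∧ (D' i).card = (A' i).card) →
      ∑ i, ∑ j ∈ D' i, p j ≤ ∑ i, ∑ j ∈ A' i, p j :=
  stmt_13_general n m e p t W A hAdisj hAfit hAmax tQ htQ A' hA'
end
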